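/- For every complex x with |x| = 1 and x ≠ 1, the strict inequality |g(x)| < |h(x)| holds, where g(x) = exp(−λT(1−x))·∑_{i=0}^{W} u(x)^i and h(x) = (W+1)·x·u(x)^W. -/

import Mathlib

/-!
On the unit circle `Re (1 - x) ≥ 0`, strictly unless `x = 1`, so `exp (-t (1 - x))` has modulus
`≤ 1` for `t ≥ 0` and `< 1` for `t > 0, x ≠ 1`. Hence `|a x| ≤ 1 - r ≤ |b x|`, i.e. `|u x| ≥ 1`,
so each term of `∑_{i ≤ W} u^i` has modulus at most `|u|^W = |h x| / (W + 1)`; the prefactor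
`exp (-λT(1 - x))` of modulus `< 1` makes the inequality strict.
-/

open Complex
open scoped ComplexOrder

lemma Complex.re_lt_one_of_norm_eq_one {x : ℂ} (hx : ‖x‖ = 1) (hx1 : x ≠ 1) : x.re < 1 := by
  refine lt_of_le_of_ne (hx ▸ re_le_norm x) fun hre => hx1 ?_
  have hnonneg : 0 ≤ x := re_eq_norm.mp (hre.trans hx.symm)
  rw [← re_add_im x, ← (nonneg_iff.mp hnonneg).2, hre]
  simp

lemma Complex.norm_exp_neg_ofReal_mul_le_one {t : ℝ} (ht : 0 ≤ t) {w : ℂ} (hw : 0 ≤ w.re) :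
    ‖exp (-(t : ℂ) * w)‖ ≤ 1 := by
  rw [norm_exp, Real.exp_le_one_iff, neg_mul, neg_re, re_ofReal_mul]
  exact neg_nonpos.mpr (mul_nonneg ht hw)

lemma Complex.norm_exp_neg_ofReal_mul_lt_one {t : ℝ} (ht : 0 < t) {w : ℂ} (hw : 0 < w.re) :
    ‖exp (-(t : ℂ) * w)‖ < 1 := by
  rw [norm_exp, Real.exp_lt_one_iff, neg_mul, neg_re, re_ofReal_mul]
  exact neg_neg_of_pos (mul_pos ht hw)

lemma Complex.one_sub_le_norm_one_sub_ofReal_mul {r : ℝ} (hr : 0 ≤ r) {q : ℂ} (hq : ‖q‖ ≤ 1) :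
    1 - r ≤ ‖1 - (r : ℂ) * q‖ := by
  have hrq : ‖(r : ℂ) * q‖ ≤ r := by
    rw [norm_mul, norm_real, Real.norm_of_nonneg hr]
    exact mul_le_of_le_one_right hr hq
  calc 1 - r ≤ ‖(1 : ℂ)‖ - ‖(r : ℂ) * q‖ := by rw [norm_one]; linarith
    _ ≤ ‖1 - (r : ℂ) * q‖ := norm_sub_norm_le _ _

lemma Complex.norm_one_sub_ofReal_mul_le {r : ℝ} (hr : r ≤ 1) {p : ℂ} (hp : ‖p‖ ≤ 1) :
    ‖(1 - (r : ℂ)) * p‖ ≤ 1 - r := by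
  rw [norm_mul, ← ofReal_one, ← ofReal_sub, norm_real, Real.norm_of_nonneg (sub_nonneg.mpr hr)]
  exact mul_le_of_le_one_right (sub_nonneg.mpr hr) hp

lemma norm_geom_sum_le {𝕜 : Type*} [NormedDivisionRing 𝕜] {u : 𝕜} (hu : 1 ≤ ‖u‖) (n : ℕ) :
    ‖∑ i ∈ Finset.range (n + 1), u ^ i‖ ≤ (n + 1) * ‖u‖ ^ n := by
  calc ‖∑ i ∈ Finset.range (n + 1), u ^ i‖ ≤ ∑ i ∈ Finset.range (n + 1), ‖u‖ ^ n := by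
        refine (norm_sum_le _ _).trans (Finset.sum_le_sum fun i hi => ?_)
        rw [norm_pow]
        exact pow_le_pow_right₀ hu (Nat.lt_succ_iff.mp (Finset.mem_range.mp hi))
    _ = (n + 1) * ‖u‖ ^ n := by simp

theorem abs_g_lt_abs_h_on_unit_circle_general
    (lam σ T r : ℝ) (hlam : 0 < lam) (hσ : 0 < σ) (hT : 0 < T)
    (hr0 : 0 ≤ r) (hr1 : r < 1) (W : ℕ)
    (a b : ℂ → ℂ) (u g h : ℂ → ℂ)
    (ha : ∀ x : ℂ, a x = (1 - (r : ℂ)) * Complex.exp (-((lam : ℂ) * σ) * (1 - x)))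
    (hb : ∀ x : ℂ, b x = 1 - (r : ℂ) * Complex.exp (-((lam : ℂ) * T) * (1 - x)))
    (hu : ∀ x : ℂ, u x = b x / a x)
    (hg : ∀ x : ℂ, g x
      = Complex.exp (-((lam : ℂ) * T) * (1 - x)) * ∑ i ∈ Finset.range (W + 1), u x ^ i)
    (hh : ∀ x : ℂ, h x = ((W : ℂ) + 1) * x * u x ^ W)
    (x : ℂ) (hx : ‖x‖ = 1) (hx1 : x ≠ 1) :
    ‖g x‖ < ‖h x‖ := by
  have hre : 0 < (1 - x).re := by
    simpa using re_lt_one_of_norm_eq_one hx hx1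
  have hexpT : ‖exp (-((lam : ℂ) * T) * (1 - x))‖ < 1 := by
    rw [← ofReal_mul]
    exact norm_exp_neg_ofReal_mul_lt_one (mul_pos hlam hT) hre
  have ha_pos : 0 < ‖a x‖ := by
    rw [ha]
    exact norm_pos_iff.mpr (mul_ne_zero (sub_ne_zero.mpr (mod_cast hr1.ne')) (exp_ne_zero _))
  have hu1 : 1 ≤ ‖u x‖ := by
    rw [hu, norm_div, one_le_div ha_pos]
    calc ‖a x‖ ≤ 1 - r := by
          rw [ha, ← ofReal_mul]
          exact norm_one_sub_ofReal_mul_le hr1.le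
            (norm_exp_neg_ofReal_mul_le_one (mul_pos hlam hσ).le hre.le)
      _ ≤ ‖b x‖ := hb x ▸ one_sub_le_norm_one_sub_ofReal_mul hr0 hexpT.le
  have hnorm_h : ‖h x‖ = (W + 1) * ‖u x‖ ^ W := by
    rw [hh, norm_mul, norm_mul, hx, mul_one, norm_pow]
    norm_cast
  calc ‖g x‖ ≤ ‖exp (-((lam : ℂ) * T) * (1 - x))‖ * ((W + 1) * ‖u x‖ ^ W) := by
        rw [hg, norm_mul]
        gcongr
        exact norm_geom_sum_le hu1 W
    _ < 1 * ((W + 1) * ‖u x‖ ^ W) := by gcongr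
    _ = ‖h x‖ := by rw [one_mul, hnorm_h]

/-- On the unit circle, away from `x = 1`, the strict inequality
`|g(x)| < |h(x)|` holds, where `g(x) = exp(-λT(1-x))·∑_{i=0}^{W} u(x)^i` and
`h(x) = (W+1)·x·u(x)^W`. -/
theorem abs_g_lt_abs_h_on_unit_circle
    (lam σ T r : ℝ) (hlam : 0 < lam) (hσ : 0 < σ) (hT : 0 < T)
    (hr0 : 0 ≤ r) (hr1 : r < 1) (W : ℕ) (hW : 1 ≤ W)
    (a b : ℂ → ℂ) (u g h : ℂ → ℂ)
    (ha : ∀ x : ℂ, a x = (1 - (r : ℂ)) * Complex.exp (-((lam : ℂ) * σ) * (1 - x)))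
    (hb : ∀ x : ℂ, b x = 1 - (r : ℂ) * Complex.exp (-((lam : ℂ) * T) * (1 - x)))
    (hu : ∀ x : ℂ, u x = b x / a x)
    (hg : ∀ x : ℂ, g x
      = Complex.exp (-((lam : ℂ) * T) * (1 - x)) * ∑ i ∈ Finset.range (W + 1), u x ^ i)
    (hh : ∀ x : ℂ, h x = ((W : ℂ) + 1) * x * u x ^ W)
    (x : ℂ) (hx : ‖x‖ = 1) (hx1 : x ≠ 1) :
    ‖g x‖ < ‖h x‖ :=
  abs_g_lt_abs_h_on_unit_circle_general lam σ T r hlam hσ hT hr0 hr1 W a b u g h ha hb hu hg hh x hx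
    hx1
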